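/- There are exactly 3 equivalence classes of closed knight paths of length 4: the quotient of the set of closed knight paths p : ZMod 4 → ℤ × ℤ by the equivalence relation p ~ g ∘ p ∘ σ (g a board symmetry, σ a dihedral reindexing of ZMod 4) has cardinality 3. -/

import Mathlib

/-- Two cells of `ℤ × ℤ` are a knight's move apart. -/
def KnightMove (u v : ℤ × ℤ) : Prop :=
  (|u.1 - v.1| = 1 ∧ |u.2 - v.2| = 2) ∨ (|u.1 - v.1| = 2 ∧ |u.2 - v.2| = 1)

/-- A closed knight path of length `n`. -/
def IsClosedKnightPath (n : ℕ) (p : ZMod n → ℤ × ℤ) : Prop :=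
  Function.Injective p ∧ ∀ i : ZMod n, KnightMove (p i) (p (i + 1))

/-- The 90° rotation `(x, y) ↦ (-y, x)` as a `ℤ`-linear automorphism of `ℤ × ℤ`. -/
def rot90 : (ℤ × ℤ) ≃ₗ[ℤ] ℤ × ℤ where
  toFun x := (-x.2, x.1)
  invFun x := (x.2, -x.1)
  map_add' a b := by simp [Prod.ext_iff]; ring
  map_smul' m x := by simp [Prod.ext_iff]
  left_inv x := by simp
  right_inv x := by simp

/-- The reflection `(x, y) ↦ (y, x)` as a `ℤ`-linear automorphism of `ℤ × ℤ`. -/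
def reflDiag : (ℤ × ℤ) ≃ₗ[ℤ] ℤ × ℤ where
  toFun x := (x.2, x.1)
  invFun x := (x.2, x.1)
  map_add' a b := by simp [Prod.ext_iff]
  map_smul' m x := by simp [Prod.ext_iff]
  left_inv x := by simp
  right_inv x := by simp

/-- A board symmetry is a map `x ↦ A x + t` with `A` in the group generated by the
90° rotation and the reflection, and `t ∈ ℤ × ℤ`. -/
def IsBoardSymmetry (g : ℤ × ℤ → ℤ × ℤ) : Prop :=
  ∃ A ∈ Subgroup.closure ({rot90, reflDiag} : Set ((ℤ × ℤ) ≃ₗ[ℤ] ℤ × ℤ)),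
    ∃ t : ℤ × ℤ, g = fun x => A x + t

/-- A dihedral reindexing of `ZMod n`: a map `i ↦ ε i + c` with `ε = ±1`. -/
def IsDihedralReindex (n : ℕ) (σ : ZMod n → ZMod n) : Prop :=
  ∃ ε c : ZMod n, (ε = 1 ∨ ε = -1) ∧ σ = fun i => ε * i + c

/-- Two paths are equivalent if one is obtained from the other by a board symmetry
together with a dihedral reindexing. -/
def PathEquiv (n : ℕ) (p p' : ZMod n → ℤ × ℤ) : Prop :=
  ∃ g σ, IsBoardSymmetry g ∧ IsDihedralReindex n σ ∧ p' = g ∘ p ∘ σ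


/-!
The four steps of a closed knight path are knight vectors summing to zero, and a finite check
shows that, once the path does not revisit a cell, they come in opposite pairs: the path is a
parallelogram spanned by knight vectors `a`, `b` with `b ≠ ±a`. A board symmetry moves `a` to
`(1, 2)`, and cyclic shifts and reversal then reduce the six admissible `b` to three shapes.
These are told apart by the product of the squared lengths of the chords `p (i + 2) - p i`,
which board symmetries preserve and reindexings only permute.
-/

theorem Nat.card_quot_eq_of_invariant {α β ι : Type*} {r : α → α → Prop} (rep : ι → α)
    (hrep : ∀ a, ∃ i, r a (rep i)) (f : α → β) (hf : ∀ a b, r a b → f a = f b)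
    (hinj : Function.Injective (f ∘ rep)) : Nat.card (Quot r) = Nat.card ι := by
  refine (Nat.card_eq_of_bijective (fun i => Quot.mk r (rep i)) ⟨fun i j hij => hinj ?_, ?_⟩).symm
  · exact congrArg (Quot.lift f hf) hij
  · refine Quot.ind fun a => ?_
    obtain ⟨i, hi⟩ := hrep a
    exact ⟨i, (Quot.sound hi).symm⟩

abbrev squareSymmetries : Subgroup ((ℤ × ℤ) ≃ₗ[ℤ] ℤ × ℤ) :=
  Subgroup.closure {rot90, reflDiag}

lemma rot90_mem_squareSymmetries : rot90 ∈ squareSymmetries := Subgroup.subset_closure (by simp)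

lemma reflDiag_mem_squareSymmetries : reflDiag ∈ squareSymmetries :=
  Subgroup.subset_closure (by simp)

@[simp] lemma rot90_apply (v : ℤ × ℤ) : rot90 v = (-v.2, v.1) := rfl

@[simp] lemma reflDiag_apply (v : ℤ × ℤ) : reflDiag v = (v.2, v.1) := rfl

def sqNorm (v : ℤ × ℤ) : ℤ := v.1 ^ 2 + v.2 ^ 2

lemma sqNorm_sub_comm (u v : ℤ × ℤ) : sqNorm (u - v) = sqNorm (v - u) := by
  simp only [sqNorm, Prod.fst_sub, Prod.snd_sub]; ring

lemma sqNorm_map {A : (ℤ × ℤ) ≃ₗ[ℤ] ℤ × ℤ} (hA : A ∈ squareSymmetries) (v : ℤ × ℤ) :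
    sqNorm (A v) = sqNorm v := by
  induction hA using Subgroup.closure_induction generalizing v with
  | mem B hB =>
    rcases hB with rfl | rfl <;> simp only [sqNorm, rot90_apply, reflDiag_apply] <;> ring
  | one => rfl
  | mul B C _ _ hB hC => exact (hB (C v)).trans (hC v)
  | inv B _ hB => rw [← hB (B⁻¹ v)]; exact congrArg sqNorm (B.apply_symm_apply v)

def knightVectors : List (ℤ × ℤ) :=
  [(1, 2), (2, 1), (2, -1), (1, -2), (-1, -2), (-2, -1), (-2, 1), (-1, 2)]

lemma mem_knightVectors_iff {v : ℤ × ℤ} : v ∈ knightVectors ↔ sqNorm v = 5 := by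
  refine ⟨fun hv => by fin_cases hv <;> rfl, fun hv => ?_⟩
  obtain ⟨x, y⟩ := v
  simp only [sqNorm] at hv
  have hx : -2 ≤ x ∧ x ≤ 2 := by constructor <;> nlinarith [sq_nonneg y]
  have hy : -2 ≤ y ∧ y ≤ 2 := by constructor <;> nlinarith [sq_nonneg x]
  obtain ⟨hx₁, hx₂⟩ := hx
  obtain ⟨hy₁, hy₂⟩ := hy
  interval_cases x <;> interval_cases y <;> simp_all [knightVectors]

lemma map_mem_knightVectors_iff {A : (ℤ × ℤ) ≃ₗ[ℤ] ℤ × ℤ} (hA : A ∈ squareSymmetries)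
    {v : ℤ × ℤ} : A v ∈ knightVectors ↔ v ∈ knightVectors := by
  rw [mem_knightVectors_iff, mem_knightVectors_iff, sqNorm_map hA]

lemma KnightMove.sub_mem_knightVectors {u v : ℤ × ℤ} (h : KnightMove u v) :
    v - u ∈ knightVectors := by
  rw [mem_knightVectors_iff, sqNorm, Prod.fst_sub, Prod.snd_sub, ← sq_abs, ← sq_abs (v.2 - u.2),
    abs_sub_comm, abs_sub_comm v.2]
  rcases h with ⟨h₁, h₂⟩ | ⟨h₁, h₂⟩ <;> rw [h₁, h₂] <;> rfl

lemma exists_mem_squareSymmetries_apply_eq_one_two {a : ℤ × ℤ} (ha : a ∈ knightVectors) :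
    ∃ A ∈ squareSymmetries, A a = (1, 2) := by
  have r := rot90_mem_squareSymmetries
  have s := reflDiag_mem_squareSymmetries
  fin_cases ha
  · exact ⟨1, one_mem _, rfl⟩
  · exact ⟨reflDiag, s, rfl⟩
  · exact ⟨rot90, r, rfl⟩
  · exact ⟨reflDiag * rot90, mul_mem s r, rfl⟩
  · exact ⟨rot90 * rot90, mul_mem r r, rfl⟩
  · exact ⟨rot90 * rot90 * reflDiag, mul_mem (mul_mem r r) s, rfl⟩
  · exact ⟨rot90 * rot90 * rot90, mul_mem (mul_mem r r) r, rfl⟩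
  · exact ⟨rot90 * reflDiag, mul_mem r s, rfl⟩

def chordProduct {n : ℕ} [NeZero n] (k : ZMod n) (p : ZMod n → ℤ × ℤ) : ℤ :=
  ∏ i, sqNorm (p (i + k) - p i)

namespace PathEquiv

variable {n : ℕ} {p q r : ZMod n → ℤ × ℤ}

lemma of_eq {A : (ℤ × ℤ) ≃ₗ[ℤ] ℤ × ℤ} (hA : A ∈ squareSymmetries) (t : ℤ × ℤ) {ε : ZMod n}
    (hε : ε = 1 ∨ ε = -1) (c : ZMod n) (h : q = fun i => A (p (ε * i + c)) + t) :
    PathEquiv n p q :=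
  ⟨fun x => A x + t, fun i => ε * i + c, ⟨A, hA, t, rfl⟩, ⟨ε, c, hε, rfl⟩, h⟩

lemma refl (p : ZMod n → ℤ × ℤ) : PathEquiv n p p :=
  of_eq (one_mem _) 0 (Or.inl rfl) 0 (by simp)

lemma trans (hpq : PathEquiv n p q) (hqr : PathEquiv n q r) : PathEquiv n p r := by
  obtain ⟨_, _, ⟨A, hA, t, rfl⟩, ⟨ε, c, hε, rfl⟩, rfl⟩ := hpq
  obtain ⟨_, _, ⟨A', hA', t', rfl⟩, ⟨ε', c', hε', rfl⟩, rfl⟩ := hqr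
  refine of_eq (mul_mem hA' hA) (A' t + t') (ε := ε * ε') ?_ (ε * c' + c) ?_
  · rcases hε with rfl | rfl <;> rcases hε' with rfl | rfl <;> simp
  · funext i
    simp only [Function.comp_apply, map_add, add_assoc]
    rw [show ε * (ε' * i + c') + c = ε * ε' * i + (ε * c' + c) by ring]
    rfl

lemma chordProduct_eq [NeZero n] (k : ZMod n) (h : PathEquiv n p q) :
    chordProduct k q = chordProduct k p := by
  obtain ⟨_, _, ⟨A, hA, t, rfl⟩, ⟨ε, c, hε | hε, rfl⟩, rfl⟩ := h <;> subst hε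
  · refine Fintype.prod_equiv (Equiv.addRight c) _ _ fun i => ?_
    simp only [Function.comp_apply, add_sub_add_right_eq_sub, ← map_sub, sqNorm_map hA,
      Equiv.coe_addRight, one_mul]
    rw [add_right_comm]
  · refine Fintype.prod_equiv (Equiv.subLeft (c - k)) _ _ fun i => ?_
    simp only [Function.comp_apply, add_sub_add_right_eq_sub, ← map_sub, sqNorm_map hA,
      Equiv.subLeft_apply]
    rw [sqNorm_sub_comm]
    congr 3 <;> ring

end PathEquiv

def parallelogram (x a b : ℤ × ℤ) : ZMod 4 → ℤ × ℤ := ![x, x + a, x + a + b, x + b]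

lemma funext_zmod_four {f g : ZMod 4 → ℤ × ℤ} (h₀ : f 0 = g 0) (h₁ : f 1 = g 1)
    (h₂ : f 2 = g 2) (h₃ : f 3 = g 3) : f = g := by
  funext i
  fin_cases i <;> assumption

lemma parallelogram_pathEquiv_map (x a b : ℤ × ℤ) {A : (ℤ × ℤ) ≃ₗ[ℤ] ℤ × ℤ}
    (hA : A ∈ squareSymmetries) :
    PathEquiv 4 (parallelogram x a b) (parallelogram 0 (A a) (A b)) :=
  PathEquiv.of_eq hA (-A x) (Or.inl rfl) 0 <| funext_zmod_four
    (by simp [parallelogram]) (by simp [parallelogram]) (by simp [parallelogram]; abel)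
    (by simp [parallelogram])

lemma parallelogram_pathEquiv_rotate (a b : ℤ × ℤ) :
    PathEquiv 4 (parallelogram 0 a b) (parallelogram 0 b (-a)) :=
  PathEquiv.of_eq (one_mem _) (-a) (Or.inl rfl) 1 <| funext_zmod_four
    (by simp [parallelogram])
    (by simp [parallelogram, show (1 + 1 : ZMod 4) = 2 from rfl])
    (by simp [parallelogram]; abel)
    (by simp [parallelogram, show (3 + 1 : ZMod 4) = 0 from rfl])

lemma parallelogram_pathEquiv_reverse (a b : ℤ × ℤ) :
    PathEquiv 4 (parallelogram 0 a b) (parallelogram 0 b a) :=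
  PathEquiv.of_eq (one_mem _) 0 (Or.inr rfl) 0 <| funext_zmod_four
    (by simp [parallelogram]) (by simp [parallelogram]) (by simp [parallelogram]; abel)
    (by simp [parallelogram])

lemma eq_neg_of_knight_cycle : ∀ a ∈ knightVectors, ∀ b ∈ knightVectors, ∀ c ∈ knightVectors,
    -(a + b + c) ∈ knightVectors → a + b ≠ 0 → b + c ≠ 0 → c = -a := by
  decide

lemma IsClosedKnightPath.eq_parallelogram {p : ZMod 4 → ℤ × ℤ} (hp : IsClosedKnightPath 4 p) :
    ∃ a ∈ knightVectors, ∃ b ∈ knightVectors, b ≠ a ∧ b ≠ -a ∧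
      p = parallelogram (p 0) a b := by
  obtain ⟨hinj, hK⟩ := hp
  have h₀₁ : p 1 - p 0 ∈ knightVectors := (hK 0).sub_mem_knightVectors
  have h₁₂ : p 2 - p 1 ∈ knightVectors := (hK 1).sub_mem_knightVectors
  have h₂₃ : p 3 - p 2 ∈ knightVectors := (hK 2).sub_mem_knightVectors
  have h₃₀ : p 0 - p 3 ∈ knightVectors := (hK 3).sub_mem_knightVectors
  have h₂₀ : p 2 ≠ p 0 := fun h => absurd (hinj h) (by decide)
  have h₃₁ : p 3 ≠ p 1 := fun h => absurd (hinj h) (by decide)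
  have hc := eq_neg_of_knight_cycle _ h₀₁ _ h₁₂ _ h₂₃ (by convert h₃₀ using 1; abel)
    (fun h => h₂₀ (by linear_combination h)) (fun h => h₃₁ (by linear_combination h))
  refine ⟨_, h₀₁, _, h₁₂, fun h => h₃₁ (by linear_combination hc + h),
    fun h => h₂₀ (by linear_combination h), funext_zmod_four ?_ ?_ ?_ ?_⟩
  all_goals simp only [parallelogram, Matrix.cons_val]
  · abel
  · abel
  · linear_combination hc

def knightSquare : Fin 3 → ZMod 4 → ℤ × ℤ :=
  ![parallelogram 0 (1, 2) (2, 1), parallelogram 0 (1, 2) (2, -1),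
    parallelogram 0 (1, 2) (1, -2)]

lemma exists_pathEquiv_knightSquare_of_parallelogram_one_two {b : ℤ × ℤ}
    (hb : b ∈ knightVectors) (hb₁ : b ≠ (1, 2)) (hb₂ : b ≠ (-1, -2)) :
    ∃ k, PathEquiv 4 (parallelogram 0 (1, 2) b) (knightSquare k) := by
  have r := rot90_mem_squareSymmetries
  have s := reflDiag_mem_squareSymmetries
  fin_cases hb
  · exact absurd rfl hb₁
  · exact ⟨0, .refl _⟩
  · exact ⟨1, .refl _⟩
  · exact ⟨2, .refl _⟩
  · exact absurd rfl hb₂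
  · exact ⟨0, (parallelogram_pathEquiv_rotate _ _).trans
      (parallelogram_pathEquiv_map 0 _ _ (mul_mem (mul_mem r r) s))⟩
  · exact ⟨1, (parallelogram_pathEquiv_reverse _ _).trans
      (parallelogram_pathEquiv_map 0 _ _ (mul_mem (mul_mem r r) r))⟩
  · exact ⟨2, (parallelogram_pathEquiv_rotate _ _).trans
      (parallelogram_pathEquiv_map 0 _ _ (mul_mem r s))⟩

lemma IsClosedKnightPath.exists_pathEquiv_knightSquare {p : ZMod 4 → ℤ × ℤ}
    (hp : IsClosedKnightPath 4 p) : ∃ k, PathEquiv 4 p (knightSquare k) := by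
  obtain ⟨a, ha, b, hb, hba, hba', hp⟩ := hp.eq_parallelogram
  obtain ⟨A, hA, hAa⟩ := exists_mem_squareSymmetries_apply_eq_one_two ha
  obtain ⟨k, hk⟩ := exists_pathEquiv_knightSquare_of_parallelogram_one_two
    ((map_mem_knightVectors_iff hA).2 hb) (fun h => hba (A.injective (h.trans hAa.symm)))
    (fun h => hba' (A.injective (by rw [h, map_neg, hAa]; rfl)))
  have hmap := parallelogram_pathEquiv_map (p 0) a b hA
  rw [hAa, ← hp] at hmap
  exact ⟨k, hmap.trans hk⟩

instance : DecidableRel KnightMove := fun _ _ => by unfold KnightMove; infer_instance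

lemma isClosedKnightPath_knightSquare (k : Fin 3) : IsClosedKnightPath 4 (knightSquare k) := by
  revert k
  unfold IsClosedKnightPath
  decide

lemma chordProduct_knightSquare_injective :
    Function.Injective fun k => chordProduct 2 (knightSquare k) := by
  decide

/-- There are exactly 3 equivalence classes of closed knight paths of length 4. -/
theorem count_closedKnightPaths_length_4 :
    Nat.card (Quot (fun p q : {p : ZMod 4 → ℤ × ℤ // IsClosedKnightPath 4 p} =>
      PathEquiv 4 p.1 q.1)) = 3 := by
  rw [Nat.card_quot_eq_of_invariant (fun k => ⟨knightSquare k, isClosedKnightPath_knightSquare k⟩)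
    (fun p => p.2.exists_pathEquiv_knightSquare) (fun p => chordProduct 2 p.1)
    (fun _ _ h => (h.chordProduct_eq 2).symm) chordProduct_knightSquare_injective, Nat.card_fin]
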